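/- arXiv:1308.4945 — 5 statements merged into one kernel-verified Lean document; each statement's English description precedes it below -/
import Mathlib

section
/- For every n ≥ 1, the cardinality of B(n) equals the n-th Fibonacci number F_n, where F_1 = F_2 = 1 and F_n = F_{n-1} + F_{n-2} for n ≥ 3. -/
/-!
Every vector of `B(n)` has the form `(1, a₁, …, a_k, 1, …, 1)` with all `aᵢ ≥ 2` and entry sum
`n`, and every such vector arises. Classifying these vectors by their last entry gives
`|B(n + 2)| = |B(n + 1)| + |B(n)|`: a final `1` can be dropped, and a final `a ≥ 2` can be
replaced by `a - 2` ones.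
-/

/-- `BSet n l` says that the integer vector `l` belongs to the recursively defined
family `B(n)`: `B(1) = {(1)}`, `B(2) = {(1,1)}`, and for `n ≥ 3`,
`B(n) = C(n) ∪ D(n)` where `C(n)` appends a final `1` to a vector of `B(n-1)` and
`D(n)` increments the last entry of a vector `(1, t₁, …, t_s)` of `B(n-1)`
provided `t_{s-1} > 1` or `s = 1`. -/
inductive BSet : ℕ → List ℕ → Prop
  | base1 : BSet 1 [1]
  | base2 : BSet 2 [1, 1]
  | extC {n : ℕ} {l : List ℕ} : 2 ≤ n → BSet n l → BSet (n + 1) (l ++ [1])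
  | extD {n : ℕ} {l : List ℕ} {t : ℕ} : 2 ≤ n → BSet n (l ++ [t]) →
      (l.length = 1 ∨ 1 < l.getLastD 0) → BSet (n + 1) (l ++ [t + 1])

def ofShape (p : List ℕ × ℕ) : List ℕ := 1 :: (p.1 ++ List.replicate p.2 1)

def shapes : ℕ → Finset (List ℕ × ℕ)
  | 0 => {([], 0)}
  | 1 => {([], 1)}
  | s + 2 =>
    (shapes (s + 1)).image (fun p => (p.1, p.2 + 1)) ∪
      (shapes s).image (fun p => (p.1 ++ [p.2 + 2], 0))

theorem card_shapes (s : ℕ) : (shapes s).card = Nat.fib (s + 1) := by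
  induction s using Nat.twoStepInduction with
  | zero => rfl
  | one => rfl
  | more s ih₀ ih₁ =>
    have hinj₁ : Function.Injective fun p : List ℕ × ℕ => (p.1, p.2 + 1) := by
      intro p q h
      simpa [Prod.ext_iff] using h
    have hinj₂ : Function.Injective fun p : List ℕ × ℕ => (p.1 ++ [p.2 + 2], 0) := by
      intro p q h
      simpa [Prod.ext_iff] using h
    rw [shapes, Finset.card_union_of_disjoint, Finset.card_image_of_injective _ hinj₁,
      Finset.card_image_of_injective _ hinj₂, ih₀, ih₁, Nat.fib_add_two (n := s + 1), add_comm]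
    simp only [Finset.disjoint_left, Finset.mem_image]
    rintro _ ⟨p, -, rfl⟩ ⟨q, -, h⟩
    exact p.2.succ_ne_zero (congrArg Prod.snd h).symm

theorem mem_shapes {s : ℕ} {p : List ℕ × ℕ} :
    p ∈ shapes s ↔ (∀ x ∈ p.1, 2 ≤ x) ∧ p.1.sum + p.2 = s := by
  induction s using Nat.twoStepInduction generalizing p with
  | zero | one =>
    obtain ⟨_ | ⟨a, L⟩, m⟩ := p
    · simp [shapes]
    · simp only [shapes, Finset.mem_singleton, Prod.mk.injEq, reduceCtorEq, false_and,
        false_iff, not_and, List.sum_cons]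
      intro hL
      have := hL a List.mem_cons_self
      omega
  | more s ih₀ ih₁ =>
    simp only [shapes, Finset.mem_union, Finset.mem_image]
    constructor
    · rintro (⟨q, hq, rfl⟩ | ⟨q, hq, rfl⟩)
      · obtain ⟨hL, hsum⟩ := ih₁.mp hq
        exact ⟨hL, by dsimp only; omega⟩
      · obtain ⟨hL, hsum⟩ := ih₀.mp hq
        simp only [List.mem_append, List.mem_singleton, List.sum_append, List.sum_singleton]
        refine ⟨fun x hx => ?_, by omega⟩
        rcases hx with hx | rfl
        exacts [hL x hx, by omega]
    · obtain ⟨L, m⟩ := p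
      rintro ⟨hL, hsum⟩
      cases m with
      | succ m => exact Or.inl ⟨(L, m), ih₁.mpr ⟨hL, by dsimp only at hsum ⊢; omega⟩, rfl⟩
      | zero =>
        obtain rfl | ⟨L, a, rfl⟩ := L.eq_nil_or_concat
        · simp at hsum
        · simp only [List.concat_eq_append, List.mem_append, List.mem_singleton] at hL hsum
          have ha : 2 ≤ a := hL a (Or.inr rfl)
          refine Or.inr ⟨(L, a - 2), ih₀.mpr ⟨fun x hx => hL x (Or.inl hx), ?_⟩, ?_⟩
          · rw [List.sum_append, List.sum_singleton] at hsum
            dsimp only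
            omega
          · rw [List.concat_eq_append, Nat.sub_add_cancel ha]

theorem ofShape_injOn : Set.InjOn ofShape {p | ∀ x ∈ p.1, 2 ≤ x} := by
  rintro ⟨L, m⟩ hL ⟨L', m'⟩ hL' h
  have hcount {L : List ℕ} (hL : ∀ x ∈ L, 2 ≤ x) (m : ℕ) :
      (L ++ List.replicate m 1).count 1 = m := by
    rw [List.count_append, List.count_replicate_self,
      List.count_eq_zero_of_not_mem fun h1 => by simpa using hL 1 h1, zero_add]
  simp only [ofShape, List.cons.injEq, true_and] at h
  obtain rfl : m = m' := by rw [← hcount hL m, h, hcount hL' m']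
  exact Prod.ext (List.append_cancel_right h) rfl

namespace BSet

theorem append_replicate_one {n : ℕ} {l : List ℕ} (hn : 2 ≤ n) (h : BSet n l) (k : ℕ) :
    BSet (n + k) (l ++ List.replicate k 1) := by
  induction k with
  | zero => simpa using h
  | succ k ih =>
    rw [List.replicate_succ', ← List.append_assoc]
    exact ih.extC (hn.trans (Nat.le_add_right n k))

theorem append_singleton_succ {n : ℕ} {l : List ℕ} (hn : 2 ≤ n)
    (hl : l.length = 1 ∨ 1 < l.getLastD 0) (h : BSet n (l ++ [1])) (k : ℕ) :
    BSet (n + k) (l ++ [k + 1]) := by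
  induction k with
  | zero => exact h
  | succ k ih => exact ih.extD (hn.trans (Nat.le_add_right n k)) hl

theorem one_cons {L : List ℕ} (hL : ∀ x ∈ L, 2 ≤ x) :
    BSet (L.sum + 1) (1 :: L) ∧ BSet (L.sum + 2) (1 :: L ++ [1]) := by
  induction L using List.reverseRecOn with
  | nil => exact ⟨base1, base2⟩
  | append_singleton L a ih =>
    simp only [List.mem_append, List.mem_singleton] at hL
    have ha : 2 ≤ a := hL a (Or.inr rfl)
    have hext : (1 :: L).length = 1 ∨ 1 < (1 :: L).getLastD 0 := by
      rcases L.eq_nil_or_concat with rfl | ⟨L, b, rfl⟩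
      · exact Or.inl rfl
      · right
        rw [List.concat_eq_append, ← List.cons_append, List.getLastD_concat]
        exact hL b (Or.inl (by simp))
    have h := (ih fun x hx => hL x (Or.inl hx)).2.append_singleton_succ (by omega) hext (a - 1)
    rw [Nat.sub_add_cancel (by omega : 1 ≤ a)] at h
    have h' : BSet (L.sum + a + 1) (1 :: (L ++ [a])) := by
      rw [← List.cons_append]
      convert h using 1
      omega
    refine ⟨by simpa using h', ?_⟩
    simpa using h'.extC (by omega)

end BSet

theorem bSet_ofShape {p : List ℕ × ℕ} (hp : ∀ x ∈ p.1, 2 ≤ x) :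
    BSet (p.1.sum + p.2 + 1) (ofShape p) := by
  obtain ⟨L, _ | m⟩ := p
  · simpa [ofShape] using (BSet.one_cons hp).1
  · dsimp only [ofShape] at hp ⊢
    have h := (BSet.one_cons hp).2.append_replicate_one le_add_self m
    rw [List.replicate_succ, List.append_cons, show L.sum + (m + 1) + 1 = L.sum + 2 + m by omega]
    exact h

theorem ofShape_extD {L l : List ℕ} {m t : ℕ} (hL : ∀ x ∈ L, 2 ≤ x)
    (he : ofShape (L, m) = l ++ [t]) (hl : l.length = 1 ∨ 1 < l.getLastD 0) :
    ∃ L' : List ℕ, (∀ x ∈ L', 2 ≤ x) ∧ L'.sum = L.sum + m + 1 ∧ ofShape (L', 0) = l ++ [t + 1] := by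
  cases m with
  | zero =>
    rw [ofShape, List.replicate_zero, List.append_nil] at he
    rcases L.eq_nil_or_concat with rfl | ⟨L, a, rfl⟩
    · obtain ⟨rfl, -⟩ := List.append_singleton_inj.mp (show [] ++ [1] = l ++ [t] from he)
      simp at hl
    · rw [List.concat_eq_append, ← List.cons_append, List.append_singleton_inj] at he
      obtain ⟨rfl, rfl⟩ := he
      simp only [List.concat_eq_append, List.mem_append, List.mem_singleton] at hL
      refine ⟨L ++ [a + 1], ?_, by simp; omega, by simp [ofShape]⟩
      simp only [List.mem_append, List.mem_singleton]
      rintro x (hx | rfl)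
      exacts [hL x (Or.inl hx), by have := hL a (Or.inr rfl); omega]
  | succ k =>
    rw [ofShape, List.replicate_succ', ← List.append_assoc, ← List.cons_append,
      List.append_singleton_inj] at he
    obtain ⟨rfl, rfl⟩ := he
    cases k with
    | zero =>
      refine ⟨L ++ [2], ?_, by simp, by simp [ofShape]⟩
      simp only [List.mem_append, List.mem_singleton]
      rintro x (hx | rfl)
      exacts [hL x hx, le_rfl]
    | succ j =>
      rw [List.replicate_succ', ← List.append_assoc, ← List.cons_append,
        List.getLastD_concat] at hl
      simp at hl

theorem BSet.exists_shape {n : ℕ} {l : List ℕ} (h : BSet n l) :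
    ∃ p : List ℕ × ℕ, (∀ x ∈ p.1, 2 ≤ x) ∧ p.1.sum + p.2 + 1 = n ∧ ofShape p = l := by
  induction h with
  | base1 => exact ⟨([], 0), by simp, rfl, rfl⟩
  | base2 => exact ⟨([], 1), by simp, rfl, rfl⟩
  | extC _ _ ih =>
    obtain ⟨⟨L, m⟩, hL, rfl, rfl⟩ := ih
    exact ⟨(L, m + 1), hL, rfl, by simp [ofShape, List.replicate_succ']⟩
  | extD _ _ hl ih =>
    obtain ⟨⟨L, m⟩, hL, rfl, he⟩ := ih
    obtain ⟨L', hL', hsum, he'⟩ := ofShape_extD hL he hl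
    exact ⟨(L', 0), hL', by dsimp only at hsum ⊢; omega, he'⟩

theorem setOf_bSet_eq (s : ℕ) : {l | BSet (s + 1) l} = ofShape '' ↑(shapes s) := by
  ext l
  simp only [Set.mem_ofPred_eq, Set.mem_image, Finset.mem_coe, mem_shapes]
  constructor
  · intro h
    obtain ⟨p, hp, hsum, rfl⟩ := h.exists_shape
    exact ⟨p, ⟨hp, by omega⟩, rfl⟩
  · rintro ⟨p, ⟨hp, rfl⟩, rfl⟩
    exact bSet_ofShape hp

/-- The cardinality of `B(n)` is the `n`-th Fibonacci number. -/
theorem card_BSet_eq_fib :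
    ∀ n : ℕ, 1 ≤ n →
      {l : List ℕ | BSet n l}.Finite ∧ {l : List ℕ | BSet n l}.ncard = Nat.fib n := by
  intro n hn
  obtain ⟨s, rfl⟩ := Nat.exists_eq_add_of_le' hn
  have hinj : Set.InjOn ofShape ↑(shapes s) :=
    ofShape_injOn.mono fun p hp => (mem_shapes.mp hp).1
  rw [setOf_bSet_eq]
  exact ⟨(shapes s).finite_toSet.image _, by
    rw [hinj.ncard_image, Set.ncard_coe_finset, card_shapes]⟩
end

section
/- For every n ≥ 4, |D(n)| = |B(n-1)| − |B(n-3)|; equivalently, the number of vectors in B(n-1) whose last two entries both equal 1 is |B(n-3)|, and D(n) is in bijection with the set of vectors in B(n-1) whose second-to-last entry is greater than 1 (or which have length 2). -/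
/-- `D(n) = {(1, t₁, …, t_{s-1}, t_s + 1) : (1, t₁, …, t_s) ∈ B(n-1), t_{s-1} > 1 or s = 1}`. -/
def DSet (n : ℕ) : Set (List ℕ) :=
  {v | ∃ (l : List ℕ) (t : ℕ), BSet (n - 1) (l ++ [t]) ∧
        (l.length = 1 ∨ 1 < l.getLastD 0) ∧ v = l ++ [t + 1]}

theorem Set.LeftInvOn.bijOn_image {α β : Type*} {f : α → β} {f' : β → α} {s : Set α}
    (h : Set.LeftInvOn f' f s) : Set.BijOn f' (f '' s) s :=
  h.injOn.bijOn_image.symm ⟨h.rightInvOn_image, h⟩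

theorem List.exists_eq_append_pair {α : Type*} {l : List α} (h : 2 ≤ l.length) :
    ∃ u a b, l = u ++ [a, b] := by
  obtain rfl | ⟨l', b, rfl⟩ := l.eq_nil_or_concat
  · simp at h
  obtain rfl | ⟨u, a, rfl⟩ := l'.eq_nil_or_concat
  · simp at h
  exact ⟨u, a, b, by simp⟩

namespace BSet

variable {n : ℕ} {l : List ℕ}

theorem pos_of_mem (h : BSet n l) {x : ℕ} (hx : x ∈ l) : 0 < x := by
  induction h with
  | base1 | base2 => simp_all
  | extC _ _ ih => grind
  | extD _ _ _ ih => grind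

theorem sum_eq (h : BSet n l) : l.sum = n := by
  induction h with
  | base1 | base2 | extC => simp_all
  | extD _ _ _ ih => simp_all; omega

def toComposition (h : BSet n l) : Composition n :=
  ⟨l, h.pos_of_mem, h.sum_eq⟩

theorem setOf_finite (n : ℕ) : {l | BSet n l}.Finite :=
  (Set.finite_range Composition.blocks).subset fun _ h => ⟨h.toComposition, rfl⟩

theorem two_le_length (h : BSet n l) (hn : 2 ≤ n) : 2 ≤ l.length := by
  induction h with
  | base1 => omega
  | base2 => simp
  | extC hn' _ ih => simpa using (ih hn').trans (Nat.le_succ _)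
  | extD hn' _ _ ih => simpa using ih hn'

theorem append_one (h : BSet n l) : BSet (n + 1) (l ++ [1]) := by
  cases h with
  | base1 => exact base2
  | base2 => exact extC le_rfl base2
  | extC hn h => exact extC (by omega) (extC hn h)
  | extD hn h hl => exact extC (by omega) (extD hn h hl)

theorem append_one_iff : BSet (n + 2) (l ++ [1]) ↔ BSet (n + 1) l := by
  refine ⟨fun h => ?_, append_one⟩
  generalize hv : l ++ [1] = v at h
  cases h with
  | base2 =>
    obtain ⟨rfl, -⟩ := List.append_inj' (s₂ := [1]) (t₂ := [1]) hv rfl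
    exact base1
  | extC _ h => rwa [(List.append_inj' hv rfl).1]
  | extD _ h _ =>
    have := h.pos_of_mem (List.mem_concat_self ..)
    have := (List.append_inj' hv rfl).2
    simp_all

theorem append_one_one_iff : BSet (n + 3) (l ++ [1, 1]) ↔ BSet (n + 1) l := by
  rw [← List.singleton_append, ← List.append_assoc, append_one_iff, append_one_iff]

theorem eq_one_of_append_one_pair {u : List ℕ} {b : ℕ} (h : BSet n (u ++ [1, b]))
    (hu : u ≠ []) : b = 1 := by
  rw [← List.singleton_append, ← List.append_assoc] at h
  generalize hv : u ++ [1] ++ [b] = v at h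
  cases h with
  | base1 => simpa using congrArg List.length hv
  | base2 =>
    obtain ⟨hu1, -⟩ := List.append_inj' (s₂ := [1]) (t₂ := [1]) hv rfl
    simp_all
  | extC _ h => simpa using (List.append_inj' hv rfl).2
  | extD _ h hl =>
    obtain ⟨rfl, -⟩ := List.append_inj' hv rfl
    simp_all

theorem ncard_setOf_append_one_one (n : ℕ) :
    {l | BSet (n + 3) l ∧ ∃ l' : List ℕ, l = l' ++ [1, 1]}.ncard = {l | BSet (n + 1) l}.ncard := by
  have himage : {l | BSet (n + 3) l ∧ ∃ l' : List ℕ, l = l' ++ [1, 1]}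
      = (· ++ [1, 1]) '' {l | BSet (n + 1) l} := by
    ext l
    constructor
    · rintro ⟨h, l', rfl⟩
      exact ⟨l', append_one_one_iff.1 h, rfl⟩
    · rintro ⟨l', h, rfl⟩
      exact ⟨append_one_one_iff.2 h, l', rfl⟩
  rw [himage, Set.ncard_image_of_injective _ (List.append_left_injective _)]

theorem length_eq_two_or_one_lt_getD_iff {v : List ℕ} (h : BSet (n + 3) v) :
    (v.length = 2 ∨ 1 < v.getD (v.length - 2) 0) ↔ ¬∃ l' : List ℕ, v = l' ++ [1, 1] := by
  obtain ⟨u, a, b, rfl⟩ := List.exists_eq_append_pair (h.two_le_length (by omega))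
  have hends : (∃ l' : List ℕ, u ++ [a, b] = l' ++ [1, 1]) ↔ a = 1 ∧ b = 1 := by
    refine ⟨fun ⟨l', hl'⟩ => by simpa using (List.append_inj' hl' rfl).2, ?_⟩
    rintro ⟨rfl, rfl⟩
    exact ⟨u, rfl⟩
  have ha : 0 < a := h.pos_of_mem (by simp)
  rw [hends]
  rcases eq_or_ne u [] with rfl | hu
  · have hsum := h.sum_eq
    simp at hsum ⊢
    omega
  · have hb : a = 1 → b = 1 := by
      rintro rfl
      exact h.eq_one_of_append_one_pair hu
    simp [hu]
    omega

end BSet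

theorem DSet_eq_image {n : ℕ} (hn : 3 ≤ n) :
    DSet n = List.modifyLast (· + 1) ''
      {v | BSet (n - 1) v ∧ (v.length = 2 ∨ 1 < v.getD (v.length - 2) 0)} := by
  ext v
  constructor
  · rintro ⟨l, t, hB, hl, rfl⟩
    refine ⟨l ++ [t], ⟨hB, ?_⟩, List.modifyLast_concat ..⟩
    obtain rfl | ⟨u, a, rfl⟩ := l.eq_nil_or_concat
    · simp at hl
    · simpa using hl
  · rintro ⟨w, ⟨hB, hw⟩, rfl⟩
    obtain ⟨u, a, b, rfl⟩ := List.exists_eq_append_pair (hB.two_le_length (by omega))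
    refine ⟨u ++ [a], b, by simpa using hB, by simpa using hw, ?_⟩
    simpa using List.modifyLast_concat (· + 1) b (u ++ [a])

/-- For `n ≥ 4`: `|D(n)| = |B(n-1)| − |B(n-3)|`; the number of vectors of `B(n-1)`
whose last two entries both equal `1` is `|B(n-3)|`; and `D(n)` is in bijection with
the set of vectors of `B(n-1)` whose second-to-last entry is greater than `1`
(or which have length `2`). -/
theorem card_DSet :
    ∀ n : ℕ, 4 ≤ n →
      (DSet n).ncard
          = {l : List ℕ | BSet (n - 1) l}.ncard - {l : List ℕ | BSet (n - 3) l}.ncard ∧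
      {l : List ℕ | BSet (n - 1) l ∧ ∃ l' : List ℕ, l = l' ++ [1, 1]}.ncard
          = {l : List ℕ | BSet (n - 3) l}.ncard ∧
      ∃ f : List ℕ → List ℕ,
        Set.BijOn f (DSet n)
          {v : List ℕ | BSet (n - 1) v ∧ (v.length = 2 ∨ 1 < v.getD (v.length - 2) 0)} := by
  intro n hn
  obtain ⟨k, rfl⟩ : ∃ k, n = k + 4 := ⟨n - 4, by omega⟩
  set T := {v : List ℕ | BSet (k + 4 - 1) v ∧ (v.length = 2 ∨ 1 < v.getD (v.length - 2) 0)}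
  set E := {l : List ℕ | BSet (k + 4 - 1) l ∧ ∃ l' : List ℕ, l = l' ++ [1, 1]}
  have hE : E.ncard = {l | BSet (k + 4 - 3) l}.ncard := BSet.ncard_setOf_append_one_one k
  have hT : T = {l | BSet (k + 3) l} \ E :=
    Set.ext fun v => and_congr_right fun h => by
      simp only [E, Set.mem_ofPred_eq, h, true_and]
      exact h.length_eq_two_or_one_lt_getD_iff
  have hD : DSet (k + 4) = List.modifyLast (· + 1) '' T := DSet_eq_image (by omega)
  have hinv : Set.LeftInvOn (List.modifyLast (· - 1)) (List.modifyLast (· + 1)) T := by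
    rintro w ⟨hw, -⟩
    obtain rfl | ⟨l, t, rfl⟩ := w.eq_nil_or_concat
    · simpa using hw.two_le_length
    · simp only [List.concat_eq_append, List.modifyLast_concat, Nat.add_sub_cancel]
  refine ⟨?_, hE, List.modifyLast (· - 1), hD ▸ hinv.bijOn_image⟩
  have hsub : E ⊆ {l | BSet (k + 3) l} := fun _ h => h.1
  rw [hD, hinv.injOn.ncard_image, hT, Set.ncard_sdiff' hsub (BSet.setOf_finite _), hE]
  rfl
end

section
/- For every n ≥ 1, B(n) consists exactly of all integer vectors (1, t_1, …, t_s) with all entries positive, 1 + t_1 + t_2 + ⋯ + t_s = n, and having the property that if t_i = 1 for some i, then t_j = 1 for all j ≥ i. -/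
/-!
Both sides are built up by the same two moves at the end of a vector: appending a `1` (the
step `C`), or raising a last entry `t ≥ 1` to `t + 1` (the step `D`). Raising keeps ones trailing
exactly when no entry after the head is `1` yet, which, when the ones of `(l, t)` already trail,
is the side condition of `D`: `l = (1)` or the last entry of `l` exceeds `1`. Each inclusion is
then an induction that peels off the last entry.
-/

theorem List.getLastD_eq_getD_length_sub_one {α : Type*} (l : List α) (d : α) :
    l.getLastD d = l.getD (l.length - 1) d := by
  induction l using List.reverseRecOn <;> simp

theorem List.getD_append_singleton_length {α : Type*} (l : List α) (a d : α) :
    (l ++ [a]).getD l.length d = a := by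
  simp

def OnesAreTrailing (l : List ℕ) : Prop :=
  ∀ i j : ℕ, 1 ≤ i → i ≤ j → j < l.length → l.getD i 0 = 1 → l.getD j 0 = 1

theorem onesAreTrailing_append_singleton_iff {l : List ℕ} {a : ℕ} :
    OnesAreTrailing (l ++ [a]) ↔
      OnesAreTrailing l ∧ ∀ i, 1 ≤ i → i < l.length → l.getD i 0 = 1 → a = 1 := by
  constructor
  · intro h
    refine ⟨fun i j hi hij hj hli => ?_, fun i hi hil hli => ?_⟩
    · have := h i j hi hij (by simp only [List.length_append, List.length_singleton]; omega)
        (by rwa [List.getD_append _ _ _ _ (by omega)])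
      rwa [List.getD_append _ _ _ _ hj] at this
    · have := h i l.length hi hil.le (by simp) (by rwa [List.getD_append _ _ _ _ hil])
      rwa [List.getD_append_singleton_length] at this
  · rintro ⟨hl, ha⟩ i j hi hij hj hli
    simp only [List.length_append, List.length_singleton] at hj
    obtain hj | rfl := Nat.lt_succ_iff_lt_or_eq.mp hj
    · rw [List.getD_append _ _ _ _ (by omega)] at hli
      rw [List.getD_append _ _ _ _ hj]
      exact hl i j hi hij hj hli
    · rw [List.getD_append_singleton_length]
      obtain hil | rfl := hij.lt_or_eq
      · exact ha i hi hil (by rwa [List.getD_append _ _ _ _ hil] at hli)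
      · rwa [List.getD_append_singleton_length] at hli

theorem OnesAreTrailing.forall_ne_one_iff {l : List ℕ} (hl : OnesAreTrailing l) (hne : l ≠ [])
    (hpos : ∀ x ∈ l, 0 < x) :
    (∀ i, 1 ≤ i → i < l.length → l.getD i 0 ≠ 1) ↔ l.length = 1 ∨ 1 < l.getLastD 0 := by
  have hlen : 0 < l.length := List.length_pos_iff.mpr hne
  rw [List.getLastD_eq_getD_length_sub_one]
  constructor
  · intro h
    by_cases h1 : l.length = 1
    · exact Or.inl h1
    · have hlast := hpos _ (List.getD_eq_getElem l 0 (by omega : l.length - 1 < l.length) ▸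
        List.getElem_mem _)
      have := h (l.length - 1) (by omega) (by omega)
      omega
  · rintro hside i hi hil hli
    have := hl i (l.length - 1) hi (by omega) (by omega) hli
    omega

def IsBVector (n : ℕ) (l : List ℕ) : Prop :=
  l.getD 0 0 = 1 ∧ l ≠ [] ∧ (∀ x ∈ l, 0 < x) ∧ l.sum = n ∧ OnesAreTrailing l

theorem isBVector_append_singleton_iff {n : ℕ} {l : List ℕ} {a : ℕ} (hl : l ≠ []) :
    IsBVector n (l ++ [a]) ↔
      l.getD 0 0 = 1 ∧ (∀ x ∈ l, 0 < x) ∧ 0 < a ∧ l.sum + a = n ∧ OnesAreTrailing l ∧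
        ∀ i, 1 ≤ i → i < l.length → l.getD i 0 = 1 → a = 1 := by
  rw [IsBVector, onesAreTrailing_append_singleton_iff,
    List.getD_append _ _ _ _ (List.length_pos_iff.mpr hl)]
  simp only [ne_eq, List.append_eq_nil_iff, List.cons_ne_self, and_false, not_false_eq_true,
    List.mem_append, List.mem_singleton, List.sum_append, List.sum_singleton, true_and]
  constructor
  · rintro ⟨h0, hpos, hsum, hl, ha⟩
    exact ⟨h0, fun x hx => hpos x (Or.inl hx), hpos a (Or.inr rfl), hsum, hl, ha⟩
  · rintro ⟨h0, hpos, ha, hsum, hl, ha'⟩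
    exact ⟨h0, fun x hx => hx.elim (hpos x) (· ▸ ha), hsum, hl, ha'⟩

theorem isBVector_singleton_one : IsBVector 1 [1] :=
  ⟨rfl, List.cons_ne_nil _ _, by simp, rfl, fun i j hi hij hj _ => by simp at hj; omega⟩

theorem isBVector_append_one_iff {n : ℕ} {l : List ℕ} (hl : l ≠ []) :
    IsBVector (n + 1) (l ++ [1]) ↔ IsBVector n l := by
  rw [isBVector_append_singleton_iff hl, IsBVector]
  simp only [Nat.lt_add_one, Nat.add_right_cancel_iff, implies_true, and_true, true_and, hl,
    ne_eq, not_false_eq_true]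

theorem isBVector_append_succ_iff {n : ℕ} {l : List ℕ} {t : ℕ} (ht : 0 < t) :
    IsBVector (n + 1) (l ++ [t + 1]) ↔
      IsBVector n (l ++ [t]) ∧ (l.length = 1 ∨ 1 < l.getLastD 0) := by
  constructor
  · intro h
    have hl : l ≠ [] := by rintro rfl; exact ht.ne' (by simpa using h.1)
    obtain ⟨h0, hpos, -, hsum, htr, hno⟩ := (isBVector_append_singleton_iff hl).1 h
    have hno' : ∀ i, 1 ≤ i → i < l.length → l.getD i 0 ≠ 1 := fun i hi hil hli => by
      have := hno i hi hil hli; omega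
    exact ⟨(isBVector_append_singleton_iff hl).2 ⟨h0, hpos, ht, by omega, htr,
      fun i hi hil hli => absurd hli (hno' i hi hil)⟩, (htr.forall_ne_one_iff hl hpos).1 hno'⟩
  · rintro ⟨h, hside⟩
    have hl : l ≠ [] := by rintro rfl; simp at hside
    obtain ⟨h0, hpos, -, hsum, htr, -⟩ := (isBVector_append_singleton_iff hl).1 h
    have hno := (htr.forall_ne_one_iff hl hpos).2 hside
    exact (isBVector_append_singleton_iff hl).2 ⟨h0, hpos, t.succ_pos, by omega, htr,
      fun i hi hil hli => absurd hli (hno i hi hil)⟩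

theorem BSet.append_one_s4 {n : ℕ} {l : List ℕ} (h : BSet n l) : BSet (n + 1) (l ++ [1]) := by
  rcases Nat.lt_or_ge n 2 with hn | hn
  · cases h with
    | base1 => exact BSet.base2
    | _ => omega
  · exact BSet.extC hn h

theorem BSet.isBVector {n : ℕ} {l : List ℕ} (h : BSet n l) : IsBVector n l := by
  induction h with
  | base1 => exact isBVector_singleton_one
  | base2 => exact (isBVector_append_one_iff (List.cons_ne_nil _ _)).2 isBVector_singleton_one
  | extC _ _ ih => exact (isBVector_append_one_iff ih.2.1).2 ih
  | extD _ _ hside ih => exact (isBVector_append_succ_iff (ih.2.2.1 _ (by simp))).2 ⟨ih, hside⟩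

theorem IsBVector.bSet {n : ℕ} {l : List ℕ} (h : IsBVector n l) : BSet n l := by
  induction n generalizing l with
  | zero =>
    obtain ⟨-, hne, hpos, hsum, -⟩ := h
    exact absurd hsum (List.sum_pos l hpos hne).ne'
  | succ n ih =>
    obtain ⟨l, a, rfl⟩ : ∃ l' a, l = l' ++ [a] :=
      ⟨_, _, (List.dropLast_append_getLast h.2.1).symm⟩
    rcases eq_or_ne l [] with rfl | hl
    · obtain ⟨h0, -, -, hsum, -⟩ := h
      simp only [List.nil_append, List.getD_cons_zero, List.sum_singleton] at h0 hsum
      subst h0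
      rw [← hsum]
      exact BSet.base1
    obtain ⟨-, hpos, ha, hsum, -⟩ := (isBVector_append_singleton_iff hl).1 h
    have hl_sum := List.sum_pos l hpos hl
    rcases a with _ | _ | t
    · omega
    · exact BSet.append_one_s4 (ih ((isBVector_append_one_iff hl).1 h))
    · obtain ⟨hB, hside⟩ := (isBVector_append_succ_iff t.succ_pos).1 h
      exact BSet.extD (by omega) (ih hB) hside

/-- For `n ≥ 1`, `B(n)` consists exactly of the integer vectors `(1, t₁, …, t_s)` with
positive entries summing to `n` such that if some entry `t_i = 1` then all later
entries equal `1`. -/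
theorem BSet_characterization :
    ∀ n : ℕ, 1 ≤ n → ∀ l : List ℕ,
      BSet n l ↔
        (l.getD 0 0 = 1 ∧ l ≠ [] ∧ (∀ x ∈ l, 0 < x) ∧ l.sum = n ∧
          ∀ i j : ℕ, 1 ≤ i → i ≤ j → j < l.length → l.getD i 0 = 1 → l.getD j 0 = 1) :=
  fun _ _ _ => ⟨BSet.isBVector, IsBVector.bSet⟩
end

section
/- Let k be a field, R = k[x,y], and let I be an (x,y)-primary monomial ideal of R. Then the integer partition (λ_1(I), λ_2(I), …) has all its (positive) parts pairwise distinct if and only if I is a lex ideal. -/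
open MvPolynomial

/-- A monomial ideal of `k[x,y]`: an ideal generated by monomials. -/
def IsMonomialIdeal {k : Type*} [Field k] (I : Ideal (MvPolynomial (Fin 2) k)) : Prop :=
  ∃ S : Set (Fin 2 →₀ ℕ),
    I = Ideal.span ((fun m => (MvPolynomial.monomial m (1 : k))) '' S)

/-- An ideal of `k[x,y]` is `(x,y)`-primary (in the sense used here) if it contains a
power of `x` and a power of `y`. -/
def IsXYPrimary {k : Type*} [Field k] (I : Ideal (MvPolynomial (Fin 2) k)) : Prop :=
  ∃ a b : ℕ, (X 0 : MvPolynomial (Fin 2) k) ^ a ∈ I ∧ (X 1 : MvPolynomial (Fin 2) k) ^ b ∈ I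

/-- `λ_i(I) = |{ j ≥ 0 : x^(i-1) y^j ∉ I }|` (for `i ≥ 1`), where `x = X 0`, `y = X 1`. -/
noncomputable def lam {k : Type*} [Field k] (I : Ideal (MvPolynomial (Fin 2) k)) (i : ℕ) : ℕ :=
  Set.ncard {j : ℕ | (X 0 : MvPolynomial (Fin 2) k) ^ (i - 1) * (X 1) ^ j ∉ I}

/-- A lex ideal of `k[x,y]`: for each degree `j`, the degree-`j` monomials in `I`
form an initial segment of the degree-`j` monomials `x^j > x^(j-1)y > ⋯ > y^j` in
descending lexicographic order (with `x = X 0 > y = X 1`); the monomial `x^a y^b`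
of degree `j = a + b` occupies position `b` in this order. -/
def IsLexIdeal {k : Type*} [Field k] (I : Ideal (MvPolynomial (Fin 2) k)) : Prop :=
  ∀ j : ℕ, ∃ m : ℕ, ∀ a b : ℕ, a + b = j →
    ((X 0 : MvPolynomial (Fin 2) k) ^ a * (X 1) ^ b ∈ I ↔ b < m)

/-!
Since `I` is an ideal containing a power of `y`, `x^a y^b ∈ I` exactly when `b ≥ h a`,
where `h a = λ_{a+1}(I)` is the height of column `a`, and `h` is antitone. Both conditions of the theorem then say that `h (a + 1) ≤ h a - 1` for all `a`: distinct
positive parts of an antitone sequence means strict decrease until it reaches `0`, and the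
antidiagonal `a + b = j` is an initial segment in `b` exactly when `x^a y^(b+1) ∈ I` forces
`x^(a+1) y^b ∈ I`.
-/

section Staircase

variable {h : ℕ → ℕ}

theorem Antitone.injOn_pos_iff_succ_le_pred (hh : Antitone h) :
    Set.InjOn h {a | 0 < h a} ↔ ∀ a, h (a + 1) ≤ h a - 1 := by
  constructor
  · intro hinj a
    have hle : h (a + 1) ≤ h a := hh (Nat.le_succ a)
    by_cases hpos : 0 < h (a + 1)
    · have hne : h (a + 1) ≠ h a := fun heq =>
        absurd (hinj hpos (show 0 < h a by omega) heq) (by omega)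
      omega
    · omega
  · intro hstep a ha a' ha' heq
    by_contra hne
    wlog hlt : a < a' generalizing a a'
    · exact this ha' ha heq.symm (Ne.symm hne) (by omega)
    have : h a' ≤ h (a + 1) := hh hlt
    have := hstep a
    simp only [Set.mem_ofPred_eq] at ha
    omega

theorem le_sub_of_forall_succ_le_pred (hstep : ∀ a, h (a + 1) ≤ h a - 1) (a d : ℕ) :
    h (a + d) ≤ h a - d := by
  induction d with
  | zero => simp
  | succ d ih =>
    rw [← add_assoc]
    have := hstep (a + d)
    omega

theorem Antitone.antidiagonal_initial_iff_succ_le_pred (hh : Antitone h) :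
    (∀ j, ∃ m, ∀ a b, a + b = j → (h a ≤ b ↔ b < m)) ↔ ∀ a, h (a + 1) ≤ h a - 1 := by
  constructor
  · intro hlex a
    by_cases hpos : h a = 0
    · have : h (a + 1) ≤ h a := hh (Nat.le_succ a)
      omega
    obtain ⟨m, hm⟩ := hlex (a + h a)
    have hlt : h a < m := (hm a (h a) rfl).1 le_rfl
    have := (hm (a + 1) (h a - 1) (by omega)).2 (by omega)
    omega
  · intro hstep j
    -- `m` is the first position on the antidiagonal that lies outside the staircase
    set m := sInf {b | j < b ∨ b < h (j - b)}
    have hne : {b | j < b ∨ b < h (j - b)}.Nonempty := ⟨j + 1, Or.inl (Nat.lt_succ_self j)⟩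
    refine ⟨m, fun a b hab => ⟨fun hb => ?_, fun hb => ?_⟩⟩
    · by_contra hbm
      have hm : j < m ∨ m < h (j - m) := Nat.sInf_mem hne
      have := le_sub_of_forall_succ_le_pred hstep a (b - m)
      rw [show a + (b - m) = j - m by omega] at this
      omega
    · have := Nat.notMem_of_lt_sInf hb
      simp only [Set.mem_ofPred_eq, not_or, not_lt] at this
      rw [show j - b = a by omega] at this
      exact this.2

end Staircase

theorem Monotone.iff_ncard_setOf_not_le {p : ℕ → Prop} (hp : Monotone p) (hex : ∃ n, p n)
    (n : ℕ) : p n ↔ {m | ¬ p m}.ncard ≤ n := by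
  classical
  have hset : {m | ¬ p m} = Set.Iio (Nat.find hex) := by
    ext m
    simp only [Set.mem_ofPred_eq, Set.mem_Iio, Nat.lt_find_iff]
    exact ⟨fun hm k hk hpk => hm (hp hk hpk), fun hm => hm m le_rfl⟩
  rw [hset, Set.ncard_Iio_nat, Nat.find_le_iff]
  exact ⟨fun hpn => ⟨n, le_rfl, hpn⟩, fun ⟨m, hm, hpm⟩ => hp hm hpm⟩

section Ideal

variable {k : Type*} [Field k] {I : Ideal (MvPolynomial (Fin 2) k)}

theorem mem_iff_lam_succ_le {B : ℕ} (hB : (X 1 : MvPolynomial (Fin 2) k) ^ B ∈ I) (a b : ℕ) :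
    (X 0 : MvPolynomial (Fin 2) k) ^ a * X 1 ^ b ∈ I ↔ lam I (a + 1) ≤ b := by
  have hmono : Monotone fun b => (X 0 : MvPolynomial (Fin 2) k) ^ a * X 1 ^ b ∈ I :=
    monotone_nat_of_le_succ fun b hb => by
      rw [pow_succ, ← mul_assoc]
      exact I.mul_mem_right _ hb
  exact hmono.iff_ncard_setOf_not_le ⟨B, I.mul_mem_left _ hB⟩ b

theorem antitone_lam_succ {B : ℕ} (hB : (X 1 : MvPolynomial (Fin 2) k) ^ B ∈ I) :
    Antitone fun a => lam I (a + 1) := by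
  refine antitone_nat_of_succ_le fun a => ?_
  rw [← mem_iff_lam_succ_le hB, pow_succ, mul_right_comm]
  exact I.mul_mem_right _ ((mem_iff_lam_succ_le hB a _).2 le_rfl)

end Ideal

theorem lam_distinct_iff_lex_general {k : Type*} [Field k]
    (I : Ideal (MvPolynomial (Fin 2) k)) (hpr : IsXYPrimary I) :
    (∀ i i' : ℕ, 1 ≤ i → 1 ≤ i' → i ≠ i' → 0 < lam I i → 0 < lam I i' →
        lam I i ≠ lam I i') ↔ IsLexIdeal I := by
  obtain ⟨-, B, -, hB⟩ := hpr
  have hh := antitone_lam_succ hB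
  have hdistinct : (∀ i i' : ℕ, 1 ≤ i → 1 ≤ i' → i ≠ i' → 0 < lam I i → 0 < lam I i' →
      lam I i ≠ lam I i') ↔ Set.InjOn (fun a => lam I (a + 1)) {a | 0 < lam I (a + 1)} := by
    constructor
    · intro H a ha a' ha' heq
      by_contra hne
      exact H (a + 1) (a' + 1) (by omega) (by omega) (by omega) ha ha' heq
    · intro H i i' hi hi' hne hp hp' heq
      obtain ⟨a, rfl⟩ : ∃ a, i = a + 1 := ⟨i - 1, by omega⟩
      obtain ⟨a', rfl⟩ : ∃ a', i' = a' + 1 := ⟨i' - 1, by omega⟩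
      exact hne (congrArg (· + 1) (H hp hp' heq))
  have hlex : IsLexIdeal I ↔
      ∀ j, ∃ m, ∀ a b, a + b = j → (lam I (a + 1) ≤ b ↔ b < m) := by
    simp only [IsLexIdeal, mem_iff_lam_succ_le hB]
  rw [hdistinct, hlex, hh.injOn_pos_iff_succ_le_pred, hh.antidiagonal_initial_iff_succ_le_pred]

/-- For an `(x,y)`-primary monomial ideal `I` of `k[x,y]`, the positive parts of the
integer partition `(λ₁(I), λ₂(I), …)` are pairwise distinct if and only if `I` is a
lex ideal. -/
theorem lam_distinct_iff_lex {k : Type*} [Field k]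
    (I : Ideal (MvPolynomial (Fin 2) k)) (hmon : IsMonomialIdeal I) (hpr : IsXYPrimary I) :
    (∀ i i' : ℕ, 1 ≤ i → 1 ≤ i' → i ≠ i' → 0 < lam I i → 0 < lam I i' →
        lam I i ≠ lam I i') ↔ IsLexIdeal I :=
  lam_distinct_iff_lex_general I hpr
end

section
/- Fix n ≥ 1 and k ≥ 1 such that C(k+2, 2) ≥ n. Then ℓ_{k+1}(n+1) = ℓ_k(n); moreover the map sending (1, k, h_2, h_3, …) to (1, k+1, h_2, h_3, …) is a bijection from L_k(n) onto L_{k+1}(n+1). -/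
/-!
An `h`-vector in `L_k(n)` has `h₂ ≤ n - 1 - k ≤ C(k+2, 2) - 1 - k = C(k+1, 2) = k^⟨1⟩`, and likewise
every `h`-vector in `L_{k+1}(n+1)` has `h₂ ≤ C(k+1, 2)`. Since `h₁` enters Macaulay's condition only
through `h₂ ≤ h₁^⟨1⟩ = C(h₁ + 1, 2)`, replacing `h₁ = k` by `k + 1` or back keeps the condition, and
the two replacements are mutually inverse.
-/

/-- `IsMacaulayRep a d j b` says that
`a = C(b d, d) + C(b (d-1), d-1) + ⋯ + C(b j, j)` with
`b d > b (d-1) > ⋯ > b j ≥ j ≥ 1`. -/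
def IsMacaulayRep (a d j : ℕ) (b : ℕ → ℕ) : Prop :=
  1 ≤ j ∧ j ≤ d ∧ j ≤ b j ∧ (∀ i, j ≤ i → i < d → b i < b (i + 1)) ∧
  a = ∑ i ∈ Finset.Icc j d, Nat.choose (b i) i

/-- Given the `d`-th Macaulay representation data `(j, b)` of a positive integer `a`,
this is `a^⟨d⟩ = C(b d + 1, d+1) + C(b (d-1) + 1, d) + ⋯ + C(b j + 1, j+1)`. -/
def macaulayBoundOf (d j : ℕ) (b : ℕ → ℕ) : ℕ :=
  ∑ i ∈ Finset.Icc j d, Nat.choose (b i + 1) (i + 1)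

/-- An `h`-vector: a finite sequence `(h₀, h₁, …, h_s)` of positive integers with
`h₀ = 1` and `h_{t+1} ≤ h_t^⟨t⟩` for all `1 ≤ t ≤ s - 1` (Macaulay's condition (C)). -/
def IsHVector (h : List ℕ) : Prop :=
  h ≠ [] ∧ (∀ x ∈ h, 0 < x) ∧ h.getD 0 0 = 1 ∧
  ∀ t : ℕ, 1 ≤ t → t + 1 < h.length →
    ∃ (j : ℕ) (b : ℕ → ℕ), IsMacaulayRep (h.getD t 0) t j b ∧
      h.getD (t + 1) 0 ≤ macaulayBoundOf t j b

/-- `L(n)`: the set of `h`-vectors whose entries sum to `n`. -/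
def LSet (n : ℕ) : Set (List ℕ) := {h | IsHVector h ∧ h.sum = n}

/-- `L_k(n)`: the set of `h`-vectors in `L(n)` with `h₁ = k`. -/
def LkSet (k n : ℕ) : Set (List ℕ) := {h | h ∈ LSet n ∧ h.getD 1 0 = k}

namespace List

theorem getD_set_ne {α : Type*} (l : List α) {i j : ℕ} (x d : α) (h : i ≠ j) :
    (l.set i x).getD j d = l.getD j d := by
  simp [getD_eq_getElem?_getD, getElem?_set_ne h]

theorem getD_set_self {α : Type*} {l : List α} {i : ℕ} (x d : α) (hi : i < l.length) :
    (l.set i x).getD i d = x := by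
  simp [getD_eq_getElem?_getD, getElem?_set_self hi]

theorem set_eq_self_of_getD_eq {α : Type*} {l : List α} {i : ℕ} {d x : α}
    (hi : i < l.length) (hx : l.getD i d = x) : l.set i x = l := by
  subst hx
  rw [getD_eq_getElem _ _ hi]
  exact set_getElem_self hi

theorem sum_set_add_getD {M : Type*} [AddCommMonoid M] (l : List M) {i : ℕ} (x : M)
    (hi : i < l.length) : (l.set i x).sum + l.getD i 0 = l.sum + x := by
  induction l generalizing i with
  | nil => simp at hi
  | cons a l ih =>
    cases i with
    | zero => simp [add_comm, add_left_comm]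
    | succ i =>
      simp only [set_cons_succ, sum_cons, getD_cons_succ, add_assoc]
      rw [ih (by simpa using hi)]

theorem getD_zero_add_getD_one_add_getD_two_le_sum (l : List ℕ) :
    l.getD 0 0 + l.getD 1 0 + l.getD 2 0 ≤ l.sum := by
  match l with
  | [] | [_] | [_, _] => simp
  | a :: b :: c :: t => simp; omega

end List

theorem isMacaulayRep_one {m : ℕ} (hm : 1 ≤ m) : IsMacaulayRep m 1 1 (fun _ => m) :=
  ⟨le_rfl, le_rfl, hm, by omega, by simp⟩

theorem macaulayBoundOf_one (m : ℕ) : macaulayBoundOf 1 1 (fun _ => m) = (m + 1).choose 2 := by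
  simp [macaulayBoundOf]

theorem IsHVector.set_one {l : List ℕ} (hl : IsHVector l) {x : ℕ} (hx : 1 ≤ x)
    (h₂ : l.getD 2 0 ≤ (x + 1).choose 2) : IsHVector (l.set 1 x) := by
  obtain ⟨hne, hpos, h₀, hmac⟩ := hl
  refine ⟨by simpa using hne, ?_, by rwa [List.getD_set_ne _ _ _ (by norm_num)], ?_⟩
  · intro y hy
    rcases List.mem_or_eq_of_mem_set hy with hy | rfl
    exacts [hpos y hy, hx]
  · intro t ht htlen
    rw [List.length_set] at htlen
    obtain rfl | ht := ht.eq_or_lt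
    · refine ⟨1, fun _ => x, ?_, ?_⟩
      · rw [List.getD_set_self _ _ (by omega)]
        exact isMacaulayRep_one hx
      · rwa [macaulayBoundOf_one, List.getD_set_ne _ _ _ (by norm_num)]
    · rw [List.getD_set_ne _ _ _ ht.ne, List.getD_set_ne _ _ _ (by omega)]
      exact hmac t ht.le htlen

section LkSet

variable {k n : ℕ} {l : List ℕ}

theorem one_lt_length_of_mem_LkSet (hk : 1 ≤ k) (hl : l ∈ LkSet k n) : 1 < l.length := by
  by_contra hlen
  have := hl.2
  rw [List.getD_eq_default _ _ (by omega)] at this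
  omega

theorem getD_two_add_le_of_mem_LkSet (hl : l ∈ LkSet k n) : l.getD 2 0 + k + 1 ≤ n := by
  obtain ⟨⟨hh, rfl⟩, rfl⟩ := hl
  have := l.getD_zero_add_getD_one_add_getD_two_le_sum
  rw [hh.2.2.1] at this
  omega

theorem set_one_mem_LkSet {x m : ℕ} (hk : 1 ≤ k) (hx : 1 ≤ x)
    (hn : n ≤ (x + 1).choose 2 + k + 1) (hm : m + k = n + x) (hl : l ∈ LkSet k n) :
    l.set 1 x ∈ LkSet x m := by
  have hlen := one_lt_length_of_mem_LkSet hk hl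
  have h₂ := getD_two_add_le_of_mem_LkSet hl
  have hsum := l.sum_set_add_getD x hlen
  obtain ⟨⟨hh, rfl⟩, rfl⟩ := hl
  exact ⟨⟨hh.set_one hx (by omega), by omega⟩, List.getD_set_self _ _ hlen⟩

theorem set_one_set_one_of_mem_LkSet (hk : 1 ≤ k) (hl : l ∈ LkSet k n) (x : ℕ) :
    (l.set 1 x).set 1 k = l := by
  rw [List.set_set]
  exact List.set_eq_self_of_getD_eq (one_lt_length_of_mem_LkSet hk hl) hl.2

end LkSet

theorem card_Lk_succ_general (n k : ℕ) (hk : 1 ≤ k)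
    (hbin : n ≤ Nat.choose (k + 2) 2) :
    (LkSet (k + 1) (n + 1)).ncard = (LkSet k n).ncard ∧
    Set.BijOn (fun h : List ℕ => h.set 1 (k + 1)) (LkSet k n) (LkSet (k + 1) (n + 1)) := by
  have hchoose : (k + 2).choose 2 = (k + 1).choose 2 + k + 1 := by
    rw [Nat.choose_succ_succ' (k + 1) 1, Nat.choose_one_right]; ring
  have hbij : Set.BijOn (fun h : List ℕ => h.set 1 (k + 1)) (LkSet k n)
      (LkSet (k + 1) (n + 1)) :=
    Set.InvOn.bijOn
      ⟨fun _ hl => set_one_set_one_of_mem_LkSet hk hl _,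
        fun _ hg => set_one_set_one_of_mem_LkSet (by omega) hg _⟩
      (fun _ hl =>
        set_one_mem_LkSet hk (by omega) (le_add_right (le_add_right hbin)) (by omega) hl)
      (fun _ hg => set_one_mem_LkSet (by omega) hk (by omega) (by omega) hg)
  exact ⟨hbij.ncard_eq.symm, hbij⟩

/-- If `n ≥ 1`, `k ≥ 1` and `C(k+2, 2) ≥ n`, then `ℓ_{k+1}(n+1) = ℓ_k(n)`; moreover
the map `(1, k, h₂, h₃, …) ↦ (1, k+1, h₂, h₃, …)` is a bijection from `L_k(n)`
onto `L_{k+1}(n+1)`. -/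
theorem card_Lk_succ (n k : ℕ) (hn : 1 ≤ n) (hk : 1 ≤ k)
    (hbin : n ≤ Nat.choose (k + 2) 2) :
    (LkSet (k + 1) (n + 1)).ncard = (LkSet k n).ncard ∧
    Set.BijOn (fun h : List ℕ => h.set 1 (k + 1)) (LkSet k n) (LkSet (k + 1) (n + 1)) :=
  card_Lk_succ_general n k hk hbin
end
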